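/- Let H and K be n×n complex Hermitian matrices with n ≥ 2, and set A = H + iK. If H is either positive definite or negative definite, then 0 < |det H| ≤ |det H| + |det K| ≤ |det A|. -/

import Mathlib

/-!
Write `H = L * L` with `L = √H` and `K = L * S * L` with `S = L⁻¹ * K * L⁻¹` Hermitian. Then
`|det A| = |det H| * |det (1 + i S)|` and `|det K| = |det H| * |det S|`, so it suffices that
`1 + |det S| ≤ |det (1 + i S)|`. In terms of the eigenvalues `λⱼ` of `S` this reads
`(1 + ∏ |λⱼ|)² ≤ ∏ (1 + λⱼ²)`, which for `n ≥ 2` follows by splitting off one factor and applying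
Cauchy–Schwarz to `(1, |λ₁|)` and `(1, ∏_{j > 1} |λⱼ|)`. The negative definite case is the
positive definite one for `(-H, -K)`.
-/

open Matrix Complex
open scoped ComplexOrder

theorem Finset.one_add_prod_le_prod_one_add {ι R : Type*} [CommSemiring R] [PartialOrder R]
    [IsOrderedRing R] {s : Finset ι} (hs : s.Nonempty) {f : ι → R} (hf : ∀ i ∈ s, 0 ≤ f i) :
    1 + ∏ i ∈ s, f i ≤ ∏ i ∈ s, (1 + f i) := by
  classical
  have hpair : {∅, s} ⊆ s.powerset := by
    simp [Finset.insert_subset_iff]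
  calc 1 + ∏ i ∈ s, f i = ∑ t ∈ {∅, s}, ∏ i ∈ t, f i := by
        rw [Finset.sum_pair hs.ne_empty.symm, Finset.prod_empty]
    _ ≤ ∑ t ∈ s.powerset, ∏ i ∈ t, f i :=
        Finset.sum_le_sum_of_subset_of_nonneg hpair fun t ht _ =>
          Finset.prod_nonneg fun i hi => hf i (Finset.mem_powerset.mp ht hi)
    _ = ∏ i ∈ s, (1 + f i) := (Finset.prod_one_add s).symm

theorem sq_one_add_prod_abs_le_prod_one_add_sq {ι : Type*} [Fintype ι]
    (hι : 2 ≤ Fintype.card ι) (l : ι → ℝ) :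
    (1 + ∏ i, |l i|) ^ 2 ≤ ∏ i, (1 + l i ^ 2) := by
  classical
  obtain ⟨i₀⟩ : Nonempty ι := Fintype.card_pos_iff.mp (by omega)
  have hrest : (Finset.univ.erase i₀).Nonempty := by
    rw [← Finset.card_pos, Finset.card_erase_of_mem (Finset.mem_univ _), Finset.card_univ]
    omega
  set a := |l i₀|
  set c := ∏ i ∈ Finset.univ.erase i₀, |l i|
  have hc : c ^ 2 = ∏ i ∈ Finset.univ.erase i₀, l i ^ 2 := by
    simp only [c, ← Finset.prod_pow, sq_abs]
  have hrest_le : 1 + c ^ 2 ≤ ∏ i ∈ Finset.univ.erase i₀, (1 + l i ^ 2) :=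
    hc ▸ Finset.one_add_prod_le_prod_one_add hrest fun i _ => sq_nonneg (l i)
  rw [← Finset.mul_prod_erase _ _ (Finset.mem_univ i₀),
    ← Finset.mul_prod_erase _ (fun i => 1 + l i ^ 2) (Finset.mem_univ i₀), ← sq_abs (l i₀)]
  calc (1 + a * c) ^ 2 ≤ (1 + a ^ 2) * (1 + c ^ 2) := by nlinarith [sq_nonneg (a - c)]
    _ ≤ _ := mul_le_mul_of_nonneg_left hrest_le (by positivity)

namespace Matrix.IsHermitian

variable {ι : Type*} [Fintype ι] [DecidableEq ι] {S : Matrix ι ι ℂ}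

theorem det_scalar_sub (hS : S.IsHermitian) (z : ℂ) :
    (scalar ι z - S).det = ∏ i, (z - hS.eigenvalues i) := by
  rw [← eval_charpoly, hS.charpoly_eq, Polynomial.eval_prod]
  simp

theorem norm_det_eq_prod_abs_eigenvalues (hS : S.IsHermitian) :
    ‖S.det‖ = ∏ i, |hS.eigenvalues i| := by
  simp [hS.det_eq_prod_eigenvalues, norm_prod]

theorem norm_det_one_add_I_smul_sq (hS : S.IsHermitian) :
    ‖(1 + I • S).det‖ ^ 2 = ∏ i, (1 + hS.eigenvalues i ^ 2) := by
  have h : 1 + I • S = (-I) • (scalar ι I - S) := by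
    rw [scalar_apply, ← smul_one_eq_diagonal, smul_sub, smul_smul, neg_mul, I_mul_I, neg_neg,
      one_smul, neg_smul, sub_neg_eq_add]
  rw [h, det_smul, hS.det_scalar_sub, norm_mul, norm_pow, norm_neg, norm_I, one_pow, one_mul,
    norm_prod, ← Finset.prod_pow]
  refine Finset.prod_congr rfl fun i _ => ?_
  rw [← normSq_eq_norm_sq, normSq_apply]
  simp only [sub_re, I_re, ofReal_re, zero_sub, mul_neg, neg_mul, neg_neg, sub_im, I_im, ofReal_im,
    sub_zero, mul_one]
  ring

theorem one_add_norm_det_le_norm_det_one_add_I_smul (hS : S.IsHermitian)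
    (hι : 2 ≤ Fintype.card ι) :
    1 + ‖S.det‖ ≤ ‖(1 + I • S).det‖ := by
  refine (pow_le_pow_iff_left₀ (by positivity) (norm_nonneg _) two_ne_zero).mp ?_
  rw [hS.norm_det_one_add_I_smul_sq, hS.norm_det_eq_prod_abs_eigenvalues]
  exact sq_one_add_prod_abs_le_prod_one_add_sq hι _

end Matrix.IsHermitian

namespace Matrix.PosDef

variable {ι : Type*} [Fintype ι] [DecidableEq ι] {H : Matrix ι ι ℂ}

open scoped MatrixOrder in
theorem exists_mul_self_eq_and_mul_mul_eq (hH : H.PosDef) {K : Matrix ι ι ℂ}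
    (hK : K.IsHermitian) :
    ∃ L S : Matrix ι ι ℂ, S.IsHermitian ∧ L * L = H ∧ L * S * L = K := by
  set L := CFC.sqrt H
  have hLL : L * L = H := CFC.sqrt_mul_sqrt_self H hH.posSemidef.nonneg
  have hL : L.IsHermitian := (CFC.sqrt_nonneg H).posSemidef.isHermitian
  have hLdet : IsUnit L.det := by
    refine isUnit_of_mul_isUnit_left (y := L.det) ?_
    rw [← det_mul, hLL]
    exact hH.isUnit.map detMonoidHom
  refine ⟨L, L⁻¹ * K * L⁻¹, ?_, hLL, ?_⟩
  · rw [IsHermitian, conjTranspose_mul, conjTranspose_mul, hL.inv.eq, hK.eq, mul_assoc]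
  · rw [Matrix.mul_assoc L, nonsing_inv_mul_cancel_right _ _ hLdet,
      mul_nonsing_inv_cancel_left _ _ hLdet]

theorem norm_det_add_norm_det_le (hH : H.PosDef) {K : Matrix ι ι ℂ} (hK : K.IsHermitian)
    (hι : 2 ≤ Fintype.card ι) :
    ‖H.det‖ + ‖K.det‖ ≤ ‖(H + I • K).det‖ := by
  obtain ⟨L, S, hS, rfl, rfl⟩ := hH.exists_mul_self_eq_and_mul_mul_eq hK
  have hA : L * L + I • (L * S * L) = L * (1 + I • S) * L := by
    rw [mul_add, add_mul, mul_one, mul_smul_comm, smul_mul_assoc]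
  simp only [hA, det_mul, norm_mul]
  calc ‖L.det‖ * ‖L.det‖ + ‖L.det‖ * ‖S.det‖ * ‖L.det‖
      = ‖L.det‖ * ‖L.det‖ * (1 + ‖S.det‖) := by ring
    _ ≤ ‖L.det‖ * ‖L.det‖ * ‖(1 + I • S).det‖ := by
        gcongr; exact hS.one_add_norm_det_le_norm_det_one_add_I_smul hι
    _ = _ := by ring

end Matrix.PosDef

theorem ostrowski_taussky_definite_general {n : ℕ} (hn : 2 ≤ n)
    (H K : Matrix (Fin n) (Fin n) ℂ)
    (hK : K.IsHermitian)
    (hHdef : H.PosDef ∨ (-H).PosDef)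
    (A : Matrix (Fin n) (Fin n) ℂ) (hA : A = H + Complex.I • K) :
    0 < ‖H.det‖ ∧
      ‖H.det‖ ≤ ‖H.det‖ + ‖K.det‖ ∧
      ‖H.det‖ + ‖K.det‖ ≤ ‖A.det‖ := by
  have hcard : 2 ≤ Fintype.card (Fin n) := by rwa [Fintype.card_fin]
  have hbound : ‖H.det‖ + ‖K.det‖ ≤ ‖A.det‖ := by
    subst hA
    rcases hHdef with hpos | hneg
    · exact hpos.norm_det_add_norm_det_le hK hcard
    · have norm_det_neg (M : Matrix (Fin n) (Fin n) ℂ) : ‖(-M).det‖ = ‖M.det‖ := by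
        simp [det_neg]
      simpa only [smul_neg, ← neg_add, norm_det_neg] using
        hneg.norm_det_add_norm_det_le hK.neg hcard
  have hdet : H.det ≠ 0 := by
    rcases hHdef with hpos | hneg
    · exact hpos.det_pos.ne'
    · exact fun h => hneg.det_pos.ne' (by rw [det_neg, h, mul_zero])
  exact ⟨norm_pos_iff.mpr hdet, le_add_of_nonneg_right (norm_nonneg _), hbound⟩

/-- For `n × n` Hermitian complex matrices `H, K` with `n ≥ 2` and `A = H + iK`,
if `H` is either positive definite or negative definite, then
`0 < |det H| ≤ |det H| + |det K| ≤ |det A|`. -/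
theorem ostrowski_taussky_definite {n : ℕ} (hn : 2 ≤ n)
    (H K : Matrix (Fin n) (Fin n) ℂ)
    (hH : H.IsHermitian) (hK : K.IsHermitian)
    (hHdef : H.PosDef ∨ (-H).PosDef)
    (A : Matrix (Fin n) (Fin n) ℂ) (hA : A = H + Complex.I • K) :
    0 < ‖H.det‖ ∧
      ‖H.det‖ ≤ ‖H.det‖ + ‖K.det‖ ∧
      ‖H.det‖ + ‖K.det‖ ≤ ‖A.det‖ :=
  ostrowski_taussky_definite_general hn H K hK hHdef A hA
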